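/- arXiv:2602.00605 — 4 statements merged into one kernel-verified Lean document; each statement's English description precedes it below -/
import Mathlib

section
/- Let ε > 0, 0 < b ≤ 1/(k−1), and let H be an n-vertex k-partite k-graph with n sufficiently large, in which every part has size at most bn and e(H) ≥ ε n^k. If every ℓ-set S of vertices with deg(S) > 0 satisfies deg(S) ≥ ε n^{k−ℓ} (after iteratively deleting all edges through ℓ-sets of degree less than ε n^{k−ℓ}, the remaining hypergraph is nonempty), then H contains an ℓ-path of length at least εn. -/
lemma count_bound {V : Type} [Fintype V] [DecidableEq V] {k : ℕ}
    (P : Fin k → Finset V) (E : Finset (Finset V)) (B : ℝ) (hB : 0 ≤ B)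
    (hP : ∀ v : V, ∃! i, v ∈ P i)
    (hPcard : ∀ i, ((P i).card : ℝ) ≤ B)
    (hE : ∀ e ∈ E, e.card = k ∧ ∀ i, (e ∩ P i).card = 1) :
    ∀ d : ℕ, ∀ T : Finset V, T.card + d = k →
      ((E.filter (fun e => T ⊆ e)).card : ℝ) ≤ B ^ d := by
  intro d
  induction d with
  | zero =>
    intro T hT
    have hsub : E.filter (fun e => T ⊆ e) ⊆ {T} := by
      intro e he
      rw [Finset.mem_filter] at he
      have h1 := (hE e he.1).1
      have : T = e := Finset.eq_of_subset_of_card_le he.2 (by omega)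
      simp [this]
    have := Finset.card_le_card hsub
    simp only [Finset.card_singleton] at this
    calc ((E.filter (fun e => T ⊆ e)).card : ℝ) ≤ 1 := by exact_mod_cast this
      _ = B ^ 0 := by simp
  | succ d IH =>
    intro T hT
    have hTk : T.card < k := by omega
    have hex : ∃ j : Fin k, ∀ x ∈ T, x ∉ P j := by
      by_contra hcon
      push_neg at hcon
      choose f hf1 hf2 using hcon
      have hinj : Set.InjOn f (Finset.univ : Finset (Fin k)) := by
        intro i _ j _ hij
        obtain ⟨u, -, hu⟩ := hP (f i)
        exact (hu i (hf2 i)).trans (hu j (hij ▸ hf2 j)).symm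
      have := Finset.card_le_card_of_injOn f (fun i _ => hf1 i) hinj
      simp at this
      omega
    obtain ⟨j, hj⟩ := hex
    have hsub : E.filter (fun e => T ⊆ e) ⊆
        (P j).biUnion (fun w => E.filter (fun e => insert w T ⊆ e)) := by
      intro e he
      rw [Finset.mem_filter] at he
      have h2 := (hE e he.1).2 j
      obtain ⟨w, hw⟩ := Finset.card_eq_one.mp h2
      have hwe : w ∈ e ∩ P j := by rw [hw]; exact Finset.mem_singleton_self w
      rw [Finset.mem_inter] at hwe
      exact Finset.mem_biUnion.mpr ⟨w, hwe.2, Finset.mem_filter.mpr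
        ⟨he.1, Finset.insert_subset hwe.1 he.2⟩⟩
    have hcard : (E.filter (fun e => T ⊆ e)).card ≤
        ∑ w ∈ P j, (E.filter (fun e => insert w T ⊆ e)).card :=
      le_trans (Finset.card_le_card hsub) (Finset.card_biUnion_le)
    calc ((E.filter (fun e => T ⊆ e)).card : ℝ)
        ≤ ∑ w ∈ P j, ((E.filter (fun e => insert w T ⊆ e)).card : ℝ) := by
          exact_mod_cast hcard
      _ ≤ ∑ w ∈ P j, B ^ d := by
          apply Finset.sum_le_sum
          intro w hw
          apply IH
          have hwT : w ∉ T := fun h => hj w h hw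
          rw [Finset.card_insert_of_notMem hwT]
          omega
      _ = ((P j).card : ℝ) * B ^ d := by rw [Finset.sum_const, nsmul_eq_mul]
      _ ≤ B * B ^ d := mul_le_mul_of_nonneg_right (hPcard j) (pow_nonneg hB d)
      _ = B ^ (d + 1) := by rw [pow_succ]; ring

lemma enum_finset {V : Type} [DecidableEq V] (e : Finset V) (dflt : V) (k : ℕ)
    (h : e.card = k) :
    ∃ w : ℕ → V, Set.InjOn w (Set.Iio k) ∧ (Finset.range k).image w = e := by
  have hlen : e.toList.length = k := by rw [Finset.length_toList, h]
  have hget : ∀ i (hi : i < k), e.toList.getD i dflt = e.toList[i]'(hlen ▸ hi) := by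
    intro i hi
    simp [List.getD_eq_getElem?_getD, List.getElem?_eq_getElem (by omega : i < e.toList.length)]
  have hinj : Set.InjOn (fun i => e.toList.getD i dflt) (Set.Iio k) := by
    intro i hi j hj hij
    simp only [Set.mem_Iio] at hi hj
    simp only [hget i hi, hget j hj] at hij
    exact (e.nodup_toList.getElem_inj_iff).mp hij
  refine ⟨fun i => e.toList.getD i dflt, hinj, ?_⟩
  apply Finset.eq_of_subset_of_card_le
  · intro x hx
    obtain ⟨i, hi, rfl⟩ := Finset.mem_image.mp hx
    rw [Finset.mem_range] at hi
    rw [hget i hi]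
    exact Finset.mem_toList.mp (List.getElem_mem _)
  · rw [Finset.card_image_of_injOn (by rwa [Finset.coe_range]), Finset.card_range, h]

/-- Let `ε > 0`, `0 < b ≤ 1/(k−1)`, and let `H` be an `n`-vertex
`k`-partite `k`-graph with `n` sufficiently large, each part of size at most `bn` and
`e(H) ≥ ε n^k`.  If every `ℓ`-set `S` of vertices with `deg(S) > 0` satisfies
`deg(S) ≥ ε n^{k−ℓ}`, then `H` contains an `ℓ`-path of length at least `εn`. -/
theorem partite_ell_path (k ℓ : ℕ) (hk : 3 ≤ k) (hℓ1 : 1 ≤ ℓ) (hℓk : ℓ < k)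
    (ε b : ℝ) (hε : 0 < ε) (hb : 0 < b) (hb' : b ≤ 1 / ((k : ℝ) - 1)) :
    ∃ n₀ : ℕ, ∀ (V : Type) (_ : Fintype V) (_ : DecidableEq V), ∀ n : ℕ,
      Fintype.card V = n → n₀ ≤ n →
      ∀ (P : Fin k → Finset V) (E : Finset (Finset V)),
      (∀ v : V, ∃! i, v ∈ P i) →
      (∀ i, ((P i).card : ℝ) ≤ b * n) →
      (∀ e ∈ E, e.card = k ∧ ∀ i, (e ∩ P i).card = 1) →
      (ε * (n : ℝ) ^ k ≤ (E.card : ℝ)) →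
      (∀ S : Finset V, S.card = ℓ →
        0 < (E.filter (fun e => S ⊆ e)).card →
        ε * (n : ℝ) ^ (k - ℓ) ≤ ((E.filter (fun e => S ⊆ e)).card : ℝ)) →
      ∃ (t : ℕ) (v : ℕ → V), ε * (n : ℝ) ≤ (t : ℝ) ∧
        Set.InjOn v (Set.Iio (ℓ + t * (k - ℓ))) ∧
        ∀ i < t, ((Finset.range k).image (fun j => v (i * (k - ℓ) + j))) ∈ E := by
  classical
  refine ⟨1, ?_⟩
  intro V _ _ n hcard hn P E hP hPsize hE hEcard hdeg
  have hnR : (1:ℝ) ≤ (n:ℝ) := by exact_mod_cast hn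
  have hnpos : (0:ℝ) < (n:ℝ) := by linarith
  have hNe : Nonempty V := by
    rw [← Fintype.card_pos_iff, hcard]; omega
  obtain ⟨dflt⟩ := hNe
  set c := k - ℓ with hc
  have hc1 : 1 ≤ c := by omega
  have hlc : ℓ + c = k := by omega
  set d := c - 1 with hd
  have hdc : d + 1 = c := by omega
  have hBnn : (0:ℝ) ≤ b * n := by positivity
  have hcount := count_bound P E (b * n) hBnn hP hPsize hE
  have hkR : (3:ℝ) ≤ (k:ℝ) := by exact_mod_cast hk
  have hk1R : (0:ℝ) < (k:ℝ) - 1 := by linarith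
  have hkey : (c:ℝ) * b ^ d ≤ 1 := by
    rcases Nat.eq_zero_or_pos d with hd0 | hd1
    · have hc1' : c = 1 := by omega
      rw [hd0, hc1']
      norm_num
    · have hb1 : b ≤ 1 := by
        calc b ≤ 1 / ((k:ℝ) - 1) := hb'
          _ ≤ 1 := by rw [div_le_one hk1R]; linarith [hkR]
      have hbd : b ^ d ≤ b := by
        calc b ^ d ≤ b ^ 1 := pow_le_pow_of_le_one (le_of_lt hb) hb1 hd1
          _ = b := pow_one b
      have hck : (c:ℝ) ≤ (k:ℝ) - 1 := by
        have h1 : c + 1 ≤ k := by omega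
        have h2 : ((c:ℝ)) + 1 ≤ (k:ℝ) := by exact_mod_cast h1
        linarith
      calc (c:ℝ) * b ^ d ≤ (c:ℝ) * b :=
            mul_le_mul_of_nonneg_left hbd (by positivity)
        _ ≤ ((k:ℝ) - 1) * (1 / ((k:ℝ) - 1)) :=
            mul_le_mul hck hb' (le_of_lt hb) (le_of_lt hk1R)
        _ = 1 := by field_simp
  set N := ⌈ε * (n:ℝ)⌉₊ with hN
  have hεnpos : (0:ℝ) < ε * n := by positivity
  have hN1 : 1 ≤ N := by
    rw [hN]
    refine Nat.one_le_iff_ne_zero.mpr (fun h0 => ?_)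
    have := Nat.ceil_eq_zero.mp h0
    linarith
  have hεN : ε * (n:ℝ) ≤ (N:ℝ) := Nat.le_ceil _
  have hNlt : (N:ℝ) < ε * n + 1 := by
    rw [hN]
    exact Nat.ceil_lt_add_one (le_of_lt hεnpos)
  have build : ∀ t : ℕ, 1 ≤ t → t ≤ N →
      ∃ v : ℕ → V, Set.InjOn v (Set.Iio (ℓ + t * c)) ∧
        ∀ i < t, ((Finset.range k).image (fun j => v (i * c + j))) ∈ E := by
    intro t
    induction t with
    | zero => omega
    | succ t IH =>
      intro _ hle
      rcases Nat.eq_zero_or_pos t with ht0 | ht1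
      · -- base case
        subst ht0
        have hEpos : (0:ℝ) < (E.card : ℝ) :=
          lt_of_lt_of_le (by positivity) hEcard
        have hEne : E.Nonempty := Finset.card_pos.mp (by exact_mod_cast hEpos)
        obtain ⟨e, he⟩ := hEne
        obtain ⟨w, hwinj, hwim⟩ := enum_finset e dflt k (hE e he).1
        refine ⟨w, ?_, ?_⟩
        · have h1 : ℓ + 1 * c = k := by omega
          rw [h1]; exact hwinj
        · intro i hi
          have h0 : i = 0 := by omega
          subst h0
          have h1 : (Finset.range k).image (fun j => w (0 * c + j))
              = (Finset.range k).image w := by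
            apply Finset.image_congr
            intro j _
            simp
          rw [h1, hwim]; exact he
      · -- inductive step
        obtain ⟨s, rfl⟩ : ∃ s, t = s + 1 := ⟨t - 1, by omega⟩
        have hsc : (s + 1) * c = s * c + c := by ring
        have hsc2 : (s + 1 + 1) * c = s * c + c + c := by ring
        obtain ⟨v, hinj, hedges⟩ := IH ht1 (by omega)
        set m := ℓ + (s + 1) * c with hm
        set S := (Finset.range ℓ).image (fun j => v ((s + 1) * c + j)) with hS
        have hScard : S.card = ℓ := by
          rw [hS, Finset.card_image_of_injOn, Finset.card_range]
          intro j1 h1 j2 h2 heq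
          rw [Finset.coe_range, Set.mem_Iio] at h1 h2
          have h1' : (s+1)*c + j1 ∈ Set.Iio m := Set.mem_Iio.mpr (by omega)
          have h2' : (s+1)*c + j2 ∈ Set.Iio m := Set.mem_Iio.mpr (by omega)
          have := hinj h1' h2' heq
          omega
        have hprevE := hedges s (by omega)
        have hSsub : S ⊆ (Finset.range k).image (fun j => v (s * c + j)) := by
          intro x hx
          obtain ⟨j, hj, rfl⟩ := Finset.mem_image.mp hx
          rw [Finset.mem_range] at hj
          refine Finset.mem_image.mpr ⟨c + j, Finset.mem_range.mpr (by omega), ?_⟩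
          congr 1
          omega
        have hpos : 0 < (E.filter (fun e => S ⊆ e)).card :=
          Finset.card_pos.mpr ⟨_, Finset.mem_filter.mpr ⟨hprevE, hSsub⟩⟩
        have hdegS := hdeg S hScard hpos
        set Fu := (Finset.range m).image v with hFu
        set U := Fu \ S with hU
        have hSFu : S ⊆ Fu := by
          intro x hx
          obtain ⟨j, hj, rfl⟩ := Finset.mem_image.mp hx
          rw [Finset.mem_range] at hj
          exact Finset.mem_image.mpr ⟨(s+1)*c + j, Finset.mem_range.mpr (by omega), rfl⟩
        have hUcard : U.card ≤ (s + 1) * c := by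
          rw [hU, Finset.card_sdiff_of_subset hSFu, hScard]
          have h1 : Fu.card ≤ m := le_trans Finset.card_image_le (by rw [Finset.card_range])
          omega
        have hgood : ∃ e ∈ E, S ⊆ e ∧ ∀ x ∈ e, x ∉ U := by
          by_contra hng
          push_neg at hng
          have hsub : E.filter (fun e => S ⊆ e) ⊆
              U.biUnion (fun w => E.filter (fun e => insert w S ⊆ e)) := by
            intro e he
            rw [Finset.mem_filter] at he
            obtain ⟨x, hxe, hxU⟩ := hng e he.1 he.2
            refine Finset.mem_biUnion.mpr ⟨x, hxU, Finset.mem_filter.mpr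
              ⟨he.1, Finset.insert_subset hxe he.2⟩⟩
          have h1 : ((E.filter (fun e => S ⊆ e)).card : ℝ)
              ≤ (U.card : ℝ) * (b * n) ^ d := by
            have hnat : (E.filter (fun e => S ⊆ e)).card ≤
                ∑ w ∈ U, (E.filter (fun e => insert w S ⊆ e)).card :=
              le_trans (Finset.card_le_card hsub) Finset.card_biUnion_le
            calc ((E.filter (fun e => S ⊆ e)).card : ℝ)
                ≤ ∑ w ∈ U, ((E.filter (fun e => insert w S ⊆ e)).card : ℝ) := by
                  exact_mod_cast hnat
              _ ≤ ∑ w ∈ U, (b * n) ^ d := by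
                  apply Finset.sum_le_sum
                  intro w hw
                  apply hcount
                  have hwS : w ∉ S := (Finset.mem_sdiff.mp hw).2
                  rw [Finset.card_insert_of_notMem hwS, hScard]
                  omega
              _ = (U.card : ℝ) * (b * n) ^ d := by
                  rw [Finset.sum_const, nsmul_eq_mul]
          have hslt : ((s:ℝ) + 1) < ε * n := by
            have h2 : ((s:ℝ) + 2) ≤ (N:ℝ) := by exact_mod_cast hle
            linarith
          have h3 : ((U.card : ℝ)) ≤ ((s:ℝ) + 1) * c := by
            have := hUcard
            have h4 : ((U.card : ℕ) : ℝ) ≤ (((s+1)*c : ℕ) : ℝ) := by exact_mod_cast this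
            push_cast at h4
            linarith
          have hfinal : ((E.filter (fun e => S ⊆ e)).card : ℝ) < ε * (n:ℝ) ^ c := by
            have hpownn : (0:ℝ) ≤ (n:ℝ) ^ d := by positivity
            calc ((E.filter (fun e => S ⊆ e)).card : ℝ)
                ≤ (U.card : ℝ) * (b * n) ^ d := h1
              _ = (U.card : ℝ) * (b ^ d * (n:ℝ) ^ d) := by rw [mul_pow]
              _ ≤ (((s:ℝ) + 1) * c) * (b ^ d * (n:ℝ) ^ d) := by
                  apply mul_le_mul_of_nonneg_right h3 (by positivity)
              _ = ((s:ℝ) + 1) * (((c:ℝ)) * b ^ d) * (n:ℝ) ^ d := by ring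
              _ ≤ ((s:ℝ) + 1) * 1 * (n:ℝ) ^ d := by
                  apply mul_le_mul_of_nonneg_right _ hpownn
                  apply mul_le_mul_of_nonneg_left hkey (by positivity)
              _ = ((s:ℝ) + 1) * (n:ℝ) ^ d := by ring
              _ < (ε * n) * (n:ℝ) ^ d := by
                  apply mul_lt_mul_of_pos_right hslt (by positivity)
              _ = ε * (n:ℝ) ^ (d + 1) := by ring
              _ = ε * (n:ℝ) ^ c := by rw [hdc]
          linarith
        obtain ⟨e, heE, hSe, heU⟩ := hgood
        have hDcard : (e \ S).card = c := by
          rw [Finset.card_sdiff_of_subset hSe, hScard, (hE e heE).1]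
        obtain ⟨w, hwinj, hwim⟩ := enum_finset (e \ S) dflt c hDcard
        have hwD : ∀ i, i < c → w i ∈ e \ S := by
          intro i hi
          rw [← hwim]
          exact Finset.mem_image.mpr ⟨i, Finset.mem_range.mpr hi, rfl⟩
        have hDF : ∀ x ∈ e \ S, x ∉ Fu := by
          intro x hxD hxF
          have hxU : x ∈ U := Finset.mem_sdiff.mpr ⟨hxF, (Finset.mem_sdiff.mp hxD).2⟩
          exact heU x (Finset.mem_sdiff.mp hxD).1 hxU
        refine ⟨fun i => if i < m then v i else w (i - m), ?_, ?_⟩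
        · -- injectivity
          have hmc : ℓ + (s + 1 + 1) * c = m + c := by rw [hm]; ring
          rw [hmc]
          intro i hi j hj heq
          rw [Set.mem_Iio] at hi hj
          simp only at heq
          by_cases him : i < m <;> by_cases hjm : j < m
          · rw [if_pos him, if_pos hjm] at heq
            exact hinj (Set.mem_Iio.mpr him) (Set.mem_Iio.mpr hjm) heq
          · rw [if_pos him, if_neg hjm] at heq
            exfalso
            refine hDF (w (j - m)) (hwD (j - m) (by omega)) ?_
            rw [← heq]
            exact Finset.mem_image.mpr ⟨i, Finset.mem_range.mpr him, rfl⟩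
          · rw [if_neg him, if_pos hjm] at heq
            exfalso
            refine hDF (w (i - m)) (hwD (i - m) (by omega)) ?_
            rw [heq]
            exact Finset.mem_image.mpr ⟨j, Finset.mem_range.mpr hjm, rfl⟩
          · rw [if_neg him, if_neg hjm] at heq
            have := hwinj (Set.mem_Iio.mpr (by omega : i - m < c))
              (Set.mem_Iio.mpr (by omega : j - m < c)) heq
            omega
        · -- edges
          intro i hi
          by_cases hi' : i < s + 1
          · have hcong : (Finset.range k).image
                (fun j => if i * c + j < m then v (i * c + j) else w (i * c + j - m))
                = (Finset.range k).image (fun j => v (i * c + j)) := by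
              apply Finset.image_congr
              intro j hj
              rw [Finset.coe_range, Set.mem_Iio] at hj
              have : i * c + j < m := by
                have h5 : i * c ≤ s * c := Nat.mul_le_mul_right c (by omega)
                omega
              simp only [if_pos this]
            rw [hcong]
            exact hedges i hi'
          · have hieq : i = s + 1 := by omega
            subst hieq
            have hsub2 : (Finset.range k).image
                (fun j => if (s+1) * c + j < m then v ((s+1) * c + j) else w ((s+1) * c + j - m)) ⊆ e := by
              intro x hx
              obtain ⟨j, hj, rfl⟩ := Finset.mem_image.mp hx
              rw [Finset.mem_range] at hj
              by_cases hjl : j < ℓ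
              · have h7 : (s+1) * c + j < m := by rw [hm]; omega
                simp only [if_pos h7]
                exact hSe (Finset.mem_image.mpr ⟨j, Finset.mem_range.mpr hjl, rfl⟩)
              · have h7 : ¬ ((s+1) * c + j < m) := by rw [hm]; omega
                simp only [if_neg h7]
                have h8 : (s+1) * c + j - m = j - ℓ := by rw [hm]; omega
                rw [h8]
                exact Finset.sdiff_subset (hwD (j - ℓ) (by omega))
            have hinj2 : Set.InjOn
                (fun j => if (s+1) * c + j < m then v ((s+1) * c + j) else w ((s+1) * c + j - m))
                ↑(Finset.range k) := by
              intro j1 h1 j2 h2 heq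
              rw [Finset.coe_range, Set.mem_Iio] at h1 h2
              simp only at heq
              by_cases hb1 : (s+1) * c + j1 < m <;> by_cases hb2 : (s+1) * c + j2 < m
              · rw [if_pos hb1, if_pos hb2] at heq
                have := hinj (Set.mem_Iio.mpr hb1) (Set.mem_Iio.mpr hb2) heq
                omega
              · rw [if_pos hb1, if_neg hb2] at heq
                exfalso
                refine hDF (w ((s+1)*c + j2 - m)) (hwD _ (by rw [hm] at hb2 ⊢; omega)) ?_
                rw [← heq]
                exact Finset.mem_image.mpr ⟨(s+1)*c + j1, Finset.mem_range.mpr hb1, rfl⟩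
              · rw [if_neg hb1, if_pos hb2] at heq
                exfalso
                refine hDF (w ((s+1)*c + j1 - m)) (hwD _ (by rw [hm] at hb1 ⊢; omega)) ?_
                rw [heq]
                exact Finset.mem_image.mpr ⟨(s+1)*c + j2, Finset.mem_range.mpr hb2, rfl⟩
              · rw [if_neg hb1, if_neg hb2] at heq
                have := hwinj (Set.mem_Iio.mpr (by rw [hm] at hb1 ⊢; omega : (s+1)*c + j1 - m < c))
                  (Set.mem_Iio.mpr (by rw [hm] at hb2 ⊢; omega : (s+1)*c + j2 - m < c)) heq
                omega
            have hcard2 : ((Finset.range k).image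
                (fun j => if (s+1) * c + j < m then v ((s+1) * c + j) else w ((s+1) * c + j - m))).card = k := by
              rw [Finset.card_image_of_injOn hinj2, Finset.card_range]
            have hEq := Finset.eq_of_subset_of_card_le hsub2
              (by rw [hcard2, (hE e heE).1])
            rw [hEq]
            exact heE
  obtain ⟨v, h1, h2⟩ := build N hN1 le_rfl
  exact ⟨N, v, hεN, h1, h2⟩
end

section
/- Let H be a k-graph on vertex set V with a partition V = A ∪ B, and let B' = {v ∈ V : deg(v,B) ≤ ε₁·C(|B|,k−1)}. Suppose the partition (A,B) minimizes e(B) among all partitions with |B| = ⌊(1−1/(s(k−ℓ)))n⌋. If A ∩ B' ≠ ∅, then B ⊆ B', i.e., every vertex v of B satisfies deg(v,B) ≤ ε₁·C(|B|,k−1). -/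
private lemma edge_count_split {V : Type*} [DecidableEq V] (k : ℕ) (hk : 1 ≤ k)
    (E : Finset (Finset V)) (hE : ∀ e ∈ E, e.card = k) (S : Finset V) (x : V) (hx : x ∈ S) :
    (E.filter (fun e => e ⊆ S)).card =
      (E.filter (fun e => e ⊆ S ∧ x ∉ e)).card +
      (((S \ {x}).powersetCard (k - 1)).filter (fun Y => insert x Y ∈ E)).card := by
  have hsplit : (E.filter (fun e => e ⊆ S)).card =
      (E.filter (fun e => e ⊆ S ∧ x ∉ e)).card +
      (E.filter (fun e => e ⊆ S ∧ x ∈ e)).card := by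
    rw [← Finset.filter_filter, ← Finset.filter_filter (fun e => e ⊆ S)]
    have h := Finset.card_filter_add_card_filter_not
      (s := E.filter (fun e => e ⊆ S)) (p := fun e => x ∉ e)
    simp only [not_not] at h
    exact h.symm
  rw [hsplit]
  congr 1
  apply Finset.card_bij (fun e _ => e.erase x)
  · intro e he
    simp only [Finset.mem_filter, Finset.mem_powersetCard] at he ⊢
    obtain ⟨heE, heS, hxe⟩ := he
    refine ⟨⟨fun y hy => ?_, ?_⟩, ?_⟩
    · rcases Finset.mem_erase.1 hy with ⟨hne, hyE⟩
      simp [Finset.mem_sdiff, heS hyE, hne]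
    · rw [Finset.card_erase_of_mem hxe, hE e heE]
    · rwa [Finset.insert_erase hxe]
  · intro e he e' he' h
    simp only [Finset.mem_filter] at he he'
    rw [← Finset.insert_erase he.2.2, ← Finset.insert_erase he'.2.2, h]
  · intro Y hY
    simp only [Finset.mem_filter, Finset.mem_powersetCard] at hY
    obtain ⟨⟨hYS, hYcard⟩, hYE⟩ := hY
    have hxY : x ∉ Y := fun h => by simpa using (hYS h)
    refine ⟨insert x Y, ?_, ?_⟩
    · simp only [Finset.mem_filter]
      refine ⟨hYE, ?_, Finset.mem_insert_self _ _⟩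
      intro y hy
      rcases Finset.mem_insert.1 hy with rfl | hyY
      · exact hx
      · exact (Finset.mem_sdiff.1 (hYS hyY)).1
    · rw [Finset.erase_insert hxY]

/-- Let `H` be a `k`-graph on `n` vertices with partition `V = A ∪ B`
(`A = Bᶜ`), where `|B| = ⌊(1−1/(s(k−ℓ)))n⌋` and `e(B)` is minimal among all partitions
with this part size.  Let `B'` be the set of vertices `v` with
`deg(v,B) ≤ ε₁·C(|B|,k−1)`.  If `A ∩ B' ≠ ∅`, then `B ⊆ B'`. -/
theorem min_partition_B_subset_Bprime (k ℓ s n : ℕ) (hk : 3 ≤ k) (hℓ1 : 1 ≤ ℓ)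
    (hℓk : ℓ < k) (hs : (s : ℤ) = ⌈(k : ℚ) / ((k : ℚ) - (ℓ : ℚ))⌉)
    (ε₁ : ℝ) (hε₁ : 0 < ε₁)
    (V : Type*) [Fintype V] [DecidableEq V] (hn : Fintype.card V = n)
    (E : Finset (Finset V)) (hE : ∀ e ∈ E, e.card = k)
    (B : Finset V)
    (hBcard : (B.card : ℤ) = ⌊(1 - 1 / ((s * (k - ℓ) : ℕ) : ℚ)) * (n : ℚ)⌋)
    (hmin : ∀ C : Finset V, C.card = B.card →
      (E.filter (fun e => e ⊆ B)).card ≤ (E.filter (fun e => e ⊆ C)).card)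
    (B' : Finset V)
    (hB' : B' = Finset.univ.filter (fun v =>
      ((((B \ {v}).powersetCard (k - 1)).filter (fun Y => insert v Y ∈ E)).card : ℝ) ≤
        ε₁ * (B.card.choose (k - 1))))
    (hAB' : (Bᶜ ∩ B').Nonempty) :
    B ⊆ B' := by
  obtain ⟨w, hw⟩ := hAB'
  rw [Finset.mem_inter, Finset.mem_compl] at hw
  obtain ⟨hwB, hwB'⟩ := hw
  have hwdeg : ((((B \ {w}).powersetCard (k - 1)).filter
      (fun Y => insert w Y ∈ E)).card : ℝ) ≤ ε₁ * (B.card.choose (k - 1)) := by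
    have := hwB'
    rw [hB', Finset.mem_filter] at this
    exact this.2
  intro u hu
  rw [hB', Finset.mem_filter]
  refine ⟨Finset.mem_univ _, ?_⟩
  have huw : u ≠ w := fun h => hwB (h ▸ hu)
  set C : Finset V := insert w (B \ {u}) with hC
  have hwC : w ∉ B \ {u} := fun h => hwB (Finset.mem_sdiff.1 h).1
  have hCcard : C.card = B.card := by
    rw [hC, Finset.card_insert_of_notMem hwC, Finset.sdiff_singleton_eq_erase,
      Finset.card_erase_of_mem hu]
    have : 1 ≤ B.card := Finset.card_pos.2 ⟨u, hu⟩
    omega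
  have hk1 : 1 ≤ k := by omega
  have hB_split := edge_count_split k hk1 E hE B u hu
  have hwC' : w ∈ C := Finset.mem_insert_self _ _
  have hC_split := edge_count_split k hk1 E hE C w hwC'
  have hCw : C \ {w} = B \ {u} := by
    rw [hC, Finset.insert_sdiff_of_mem _ (Finset.mem_singleton_self w),
      Finset.sdiff_singleton_eq_erase (w), Finset.erase_eq_of_notMem hwC]
  have hfilter_eq : E.filter (fun e => e ⊆ B ∧ u ∉ e) =
      E.filter (fun e => e ⊆ C ∧ w ∉ e) := by
    apply Finset.filter_congr
    intro e _
    constructor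
    · rintro ⟨heB, hue⟩
      refine ⟨fun y hy => ?_, fun h => hwB (heB h)⟩
      rcases eq_or_ne y u with rfl | hne
      · exact absurd hy hue
      · exact Finset.mem_insert_of_mem (Finset.mem_sdiff.2 ⟨heB hy, by simpa using hne⟩)
    · rintro ⟨heC, hwe⟩
      have heBu : e ⊆ B \ {u} := by
        intro y hy
        rcases Finset.mem_insert.1 (heC hy) with rfl | h
        · exact absurd hy hwe
        · exact h
      exact ⟨fun y hy => (Finset.mem_sdiff.1 (heBu hy)).1,
        fun h => by simpa using (Finset.mem_sdiff.1 (heBu h)).2⟩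
  -- degree of w counted within C is at most degree within B
  have hdegw_le : (((C \ {w}).powersetCard (k - 1)).filter
        (fun Y => insert w Y ∈ E)).card ≤
      (((B \ {w}).powersetCard (k - 1)).filter (fun Y => insert w Y ∈ E)).card := by
    apply Finset.card_le_card
    apply Finset.filter_subset_filter
    apply Finset.powersetCard_mono
    rw [hCw]
    intro y hy
    have hy' := Finset.mem_sdiff.1 hy
    exact Finset.mem_sdiff.2 ⟨hy'.1, fun h => hwB ((Finset.mem_singleton.1 h) ▸ hy'.1)⟩
  have hmin' := hmin C hCcard
  rw [hB_split, hC_split, hfilter_eq] at hmin'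
  have hdeg_le : (((B \ {u}).powersetCard (k - 1)).filter
        (fun Y => insert u Y ∈ E)).card ≤
      (((B \ {w}).powersetCard (k - 1)).filter (fun Y => insert w Y ∈ E)).card := by
    omega
  calc ((((B \ {u}).powersetCard (k - 1)).filter (fun Y => insert u Y ∈ E)).card : ℝ)
      ≤ (((B \ {w}).powersetCard (k - 1)).filter (fun Y => insert w Y ∈ E)).card := by
        exact_mod_cast hdeg_le
    _ ≤ ε₁ * (B.card.choose (k - 1)) := hwdeg
end

section
/- Let A₁,…,Aₙ be events in a probability space with P[Aᵢ] ≤ p for all i, and let G be a negative dependency graph for them with maximum degree at most d. If e·p·(d+1) < 1 (e is Euler's number), then P[⋂ᵢ complement(Aᵢ)] > 0. -/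
open MeasureTheory

/-- Lovász Local Lemma with a negative dependency graph.  If events
`A₁,…,Aₙ` satisfy `P[Aᵢ] ≤ p`, `G` is a negative dependency graph for them with
maximum degree at most `d`, and `e·p·(d+1) < 1`, then `P[⋂ᵢ Aᵢᶜ] > 0`. -/
theorem lovasz_local_lemma_negative_dependency {Ω : Type*} [MeasurableSpace Ω]
    (μ : Measure Ω) [IsProbabilityMeasure μ] (n : ℕ) (A : Fin n → Set Ω)
    (hA : ∀ i, MeasurableSet (A i))
    (G : SimpleGraph (Fin n)) [DecidableRel G.Adj] (p : ℝ) (d : ℕ)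
    (hp : ∀ i, (μ (A i)).toReal ≤ p)
    (hd : ∀ i, (Finset.univ.filter (fun j => G.Adj i j)).card ≤ d)
    (hneg : ∀ i, ∀ S : Finset (Fin n), (∀ j ∈ S, j ≠ i ∧ ¬ G.Adj i j) →
      0 < μ (⋂ j ∈ S, (A j)ᶜ) →
      μ (A i ∩ ⋂ j ∈ S, (A j)ᶜ) ≤ μ (A i) * μ (⋂ j ∈ S, (A j)ᶜ))
    (hcond : Real.exp 1 * p * ((d : ℝ) + 1) < 1) :
    0 < μ (⋂ i, (A i)ᶜ) := by
  rcases Nat.eq_zero_or_pos n with hn | hn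
  · subst hn
    simp only [Set.iInter_of_empty]
    simp
  have hp0 : 0 ≤ p := le_trans ENNReal.toReal_nonneg (hp ⟨0, hn⟩)
  set x : ℝ := 1 / ((d : ℝ) + 2) with hxdef
  have hd2 : (0:ℝ) < (d : ℝ) + 2 := by positivity
  have hd1 : (0:ℝ) < (d : ℝ) + 1 := by positivity
  have hx0 : 0 < x := by positivity
  have hx1 : x < 1 := by
    rw [hxdef, div_lt_one hd2]; linarith
  have h1x0 : 0 < 1 - x := by linarith
  have h1x1 : 1 - x ≤ 1 := by linarith
  have h1xeq : 1 - x = ((d : ℝ) + 1) / ((d : ℝ) + 2) := by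
    rw [hxdef]; field_simp; ring
  -- key inequality : e * (d+1) * (x * (1-x)^d) ≥ 1
  have hexp : ((d : ℝ) + 2) / ((d : ℝ) + 1) ≤ Real.exp (1 / ((d : ℝ) + 1)) := by
    have h := Real.add_one_le_exp (1 / ((d : ℝ) + 1))
    have heq : ((d : ℝ) + 2) / ((d : ℝ) + 1) = 1 / ((d : ℝ) + 1) + 1 := by
      field_simp; ring
    linarith
  have hexpow : (((d : ℝ) + 2) / ((d : ℝ) + 1)) ^ (d + 1) ≤ Real.exp 1 := by
    calc (((d : ℝ) + 2) / ((d : ℝ) + 1)) ^ (d + 1)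
        ≤ (Real.exp (1 / ((d : ℝ) + 1))) ^ (d + 1) := by
          apply pow_le_pow_left₀ (by positivity) hexp
      _ = Real.exp 1 := by
          rw [← Real.exp_nat_mul]
          congr 1
          push_cast
          field_simp
  have hprod : (((d : ℝ) + 2) / ((d : ℝ) + 1)) ^ (d + 1) * (((d : ℝ) + 1) * (x * (1 - x) ^ d)) = 1 := by
    rw [hxdef, h1xeq, div_pow, div_pow, pow_succ]
    field_simp
    ring
  have hkey : 1 ≤ Real.exp 1 * (((d : ℝ) + 1) * (x * (1 - x) ^ d)) := by
    calc (1:ℝ) = (((d : ℝ) + 2) / ((d : ℝ) + 1)) ^ (d + 1) * (((d : ℝ) + 1) * (x * (1 - x) ^ d)) :=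
          hprod.symm
      _ ≤ Real.exp 1 * (((d : ℝ) + 1) * (x * (1 - x) ^ d)) := by
          apply mul_le_mul_of_nonneg_right hexpow
          positivity
  have hpx : p ≤ x * (1 - x) ^ d := by
    by_contra h
    push_neg at h
    have hxd : 0 < x * (1 - x) ^ d := by positivity
    have h1 : Real.exp 1 * (((d : ℝ) + 1) * (x * (1 - x) ^ d)) < Real.exp 1 * p * ((d : ℝ) + 1) := by
      have he : 0 < Real.exp 1 := Real.exp_pos 1
      nlinarith
    linarith
  -- abbreviations
  set F : Finset (Fin n) → ℝ := fun S => (μ (⋂ j ∈ S, (A j)ᶜ)).toReal with hF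
  -- decomposition identity
  have hins : ∀ (j : Fin n) (S : Finset (Fin n)), j ∉ S →
      F (insert j S) = F S - (μ (A j ∩ ⋂ k ∈ S, (A k)ᶜ)).toReal := by
    intro j S hj
    have hdiff := measure_inter_add_diff (μ := μ) (⋂ k ∈ S, (A k)ᶜ) (hA j)
    have hset : ⋂ k ∈ insert j S, (A k)ᶜ = (⋂ k ∈ S, (A k)ᶜ) \ A j := by
      rw [Finset.set_biInter_insert, Set.diff_eq, Set.inter_comm]
    have hset2 : A j ∩ ⋂ k ∈ S, (A k)ᶜ = (⋂ k ∈ S, (A k)ᶜ) ∩ A j := Set.inter_comm _ _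
    have h1 : (μ ((⋂ k ∈ S, (A k)ᶜ) ∩ A j)).toReal + (μ ((⋂ k ∈ S, (A k)ᶜ) \ A j)).toReal
        = (μ (⋂ k ∈ S, (A k)ᶜ)).toReal := by
      rw [← ENNReal.toReal_add (measure_ne_top μ _) (measure_ne_top μ _), hdiff]
    simp only [hF, hset, hset2]
    linarith
  -- main double induction
  have main : ∀ k : ℕ, ∀ S : Finset (Fin n), S.card ≤ k →
      ((1 - x) ^ S.card ≤ F S ∧
        ∀ i ∉ S, (μ (A i ∩ ⋂ j ∈ S, (A j)ᶜ)).toReal ≤ x * F S) := by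
    intro k
    induction k with
    | zero =>
      intro S hS
      have hSe : S = ∅ := Finset.card_eq_zero.mp (Nat.le_zero.mp hS)
      subst hSe
      have hFe : F ∅ = 1 := by simp [hF]
      constructor
      · rw [hFe]; simp
      · intro i _
        have : (μ (A i ∩ ⋂ j ∈ (∅ : Finset (Fin n)), (A j)ᶜ)).toReal = (μ (A i)).toReal := by
          simp
        rw [this, hFe, mul_one]
        calc (μ (A i)).toReal ≤ p := hp i
          _ ≤ x * (1 - x) ^ d := hpx
          _ ≤ x * 1 := by
              apply mul_le_mul_of_nonneg_left _ (le_of_lt hx0)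
              exact pow_le_one₀ (le_of_lt h1x0) h1x1
          _ = x := mul_one x
    | succ k IH =>
      intro S hS
      by_cases hSk : S.card ≤ k
      · exact IH S hSk
      have hcard : S.card = k + 1 := le_antisymm hS (by omega)
      -- Part 1
      have part1 : (1 - x) ^ S.card ≤ F S := by
        obtain ⟨i, hi⟩ := Finset.card_pos.mp (by omega : 0 < S.card)
        have hins' : S = insert i (S.erase i) := (Finset.insert_erase hi).symm
        have hie : i ∉ S.erase i := Finset.notMem_erase i S
        have hce : (S.erase i).card = k := by
          rw [Finset.card_erase_of_mem hi, hcard]; omega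

        obtain ⟨ih1, ih2⟩ := IH (S.erase i) (le_of_eq hce)
        have h2 := ih2 i hie
        have hFnn : 0 ≤ F (S.erase i) := ENNReal.toReal_nonneg
        calc (1 - x) ^ S.card = (1 - x) * (1 - x) ^ k := by rw [hcard, pow_succ, mul_comm]
          _ ≤ (1 - x) * F (S.erase i) := by
              apply mul_le_mul_of_nonneg_left _ (le_of_lt h1x0)
              rw [← hce]; exact ih1
          _ = F (S.erase i) - x * F (S.erase i) := by ring
          _ ≤ F (S.erase i) - (μ (A i ∩ ⋂ j ∈ S.erase i, (A j)ᶜ)).toReal := by linarith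
          _ = F (insert i (S.erase i)) := (hins i (S.erase i) hie).symm
          _ = F S := by rw [← hins']
      refine ⟨part1, ?_⟩
      -- Part 2
      intro i hiS
      set T : Finset (Fin n) := S.filter (fun j => ¬ G.Adj i j) with hT
      set N : Finset (Fin n) := S.filter (fun j => G.Adj i j) with hN
      have hTN : T ∪ N = S := by
        rw [hT, hN, Finset.union_comm]
        exact Finset.filter_union_filter_not_eq _ S
      have hNd : N.card ≤ d := by
        refine le_trans (Finset.card_le_card ?_) (hd i)
        rw [hN]
        exact Finset.filter_subset_filter _ (Finset.subset_univ S)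
      -- step claim: for N' ⊆ N, (1-x)^{|N'|} * F T ≤ F (T ∪ N')
      have claim : ∀ N' : Finset (Fin n), N' ⊆ N → (1 - x) ^ N'.card * F T ≤ F (T ∪ N') := by
        intro N'
        induction N' using Finset.induction_on with
        | empty => intro _; simp
        | @insert j N'' hjN'' ih =>
          intro hsub
          have hjN : j ∈ N := hsub (Finset.mem_insert_self j N'')
          have hN''N : N'' ⊆ N := fun a ha => hsub (Finset.mem_insert_of_mem ha)
          have hjT : j ∉ T := by
            rw [hT, Finset.mem_filter]
            rw [hN, Finset.mem_filter] at hjN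
            tauto
          have hjTN : j ∉ T ∪ N'' := by
            simp only [Finset.mem_union]
            tauto
          have hjS : j ∈ S := by rw [hN, Finset.mem_filter] at hjN; exact hjN.1
          have hsubS : T ∪ N'' ⊆ S := by
            apply Finset.union_subset
            · rw [hT]; exact Finset.filter_subset _ _
            · exact le_trans hN''N (by rw [hN]; exact Finset.filter_subset _ _)
          have hsubcard : (T ∪ N'').card ≤ k := by
            have : T ∪ N'' ⊆ S.erase j := by
              intro a ha
              refine Finset.mem_erase.mpr ⟨?_, hsubS ha⟩
              rintro rfl; exact hjTN ha
            calc (T ∪ N'').card ≤ (S.erase j).card := Finset.card_le_card this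
              _ = k := by rw [Finset.card_erase_of_mem hjS, hcard]; omega
          obtain ⟨_, ih2⟩ := IH (T ∪ N'') hsubcard
          have h2 := ih2 j hjTN
          have hstep : (1 - x) * F (T ∪ N'') ≤ F (T ∪ insert j N'') := by
            have heq : T ∪ insert j N'' = insert j (T ∪ N'') := by
              rw [Finset.union_insert]
            rw [heq, hins j (T ∪ N'') hjTN]
            linarith
          have hFnn : 0 ≤ F T := ENNReal.toReal_nonneg
          calc (1 - x) ^ (insert j N'').card * F T
              = (1 - x) * ((1 - x) ^ N''.card * F T) := by
                rw [Finset.card_insert_of_notMem hjN'', pow_succ]; ring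
            _ ≤ (1 - x) * F (T ∪ N'') := by
                apply mul_le_mul_of_nonneg_left (ih hN''N) (le_of_lt h1x0)
            _ ≤ F (T ∪ insert j N'') := hstep
      have hclaimN : (1 - x) ^ N.card * F T ≤ F S := by
        have := claim N (le_refl N)
        rwa [hTN] at this
      -- positivity of μ (⋂ over S), hence over T
      have hFSpos : 0 < F S := lt_of_lt_of_le (by positivity) part1
      have hμSpos : 0 < μ (⋂ j ∈ S, (A j)ᶜ) := by
        rw [pos_iff_ne_zero]
        intro h
        rw [hF] at hFSpos
        simp only [h, ENNReal.toReal_zero] at hFSpos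
        exact lt_irrefl 0 hFSpos
      have hTsubS : T ⊆ S := by rw [hT]; exact Finset.filter_subset _ _
      have hsetTS : (⋂ j ∈ S, (A j)ᶜ) ⊆ ⋂ j ∈ T, (A j)ᶜ := by
        apply Set.biInter_subset_biInter_left
        exact_mod_cast hTsubS
      have hμTpos : 0 < μ (⋂ j ∈ T, (A j)ᶜ) := lt_of_lt_of_le hμSpos (measure_mono hsetTS)
      -- apply hneg
      have hTcond : ∀ j ∈ T, j ≠ i ∧ ¬ G.Adj i j := by
        intro j hj
        rw [hT, Finset.mem_filter] at hj
        constructor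
        · rintro rfl; exact hiS hj.1
        · exact hj.2
      have hnegT := hneg i T hTcond hμTpos
      have hgT : (μ (A i ∩ ⋂ j ∈ T, (A j)ᶜ)).toReal ≤ p * F T := by
        have h1 : (μ (A i ∩ ⋂ j ∈ T, (A j)ᶜ)).toReal ≤ (μ (A i)).toReal * (μ (⋂ j ∈ T, (A j)ᶜ)).toReal := by
          rw [← ENNReal.toReal_mul]
          exact ENNReal.toReal_mono (ENNReal.mul_ne_top (measure_ne_top μ _) (measure_ne_top μ _)) hnegT
        calc (μ (A i ∩ ⋂ j ∈ T, (A j)ᶜ)).toReal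
            ≤ (μ (A i)).toReal * (μ (⋂ j ∈ T, (A j)ᶜ)).toReal := h1
          _ ≤ p * F T := by
              apply mul_le_mul_of_nonneg_right (hp i) ENNReal.toReal_nonneg
      have hgST : (μ (A i ∩ ⋂ j ∈ S, (A j)ᶜ)).toReal ≤ (μ (A i ∩ ⋂ j ∈ T, (A j)ᶜ)).toReal := by
        apply ENNReal.toReal_mono (measure_ne_top μ _)
        exact measure_mono (Set.inter_subset_inter_right _ hsetTS)
      have hFTnn : 0 ≤ F T := ENNReal.toReal_nonneg
      have hpowle : (1 - x) ^ d ≤ (1 - x) ^ N.card :=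
        pow_le_pow_of_le_one (le_of_lt h1x0) h1x1 hNd
      calc (μ (A i ∩ ⋂ j ∈ S, (A j)ᶜ)).toReal
          ≤ p * F T := le_trans hgST hgT
        _ ≤ (x * (1 - x) ^ d) * F T := mul_le_mul_of_nonneg_right hpx hFTnn
        _ ≤ (x * (1 - x) ^ N.card) * F T := by
            apply mul_le_mul_of_nonneg_right _ hFTnn
            exact mul_le_mul_of_nonneg_left hpowle (le_of_lt hx0)
        _ = x * ((1 - x) ^ N.card * F T) := by ring
        _ ≤ x * F S := mul_le_mul_of_nonneg_left hclaimN (le_of_lt hx0)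
  -- conclusion
  obtain ⟨h1, _⟩ := main n Finset.univ (by simp)
  have hFpos : 0 < (μ (⋂ j ∈ (Finset.univ : Finset (Fin n)), (A j)ᶜ)).toReal :=
    lt_of_lt_of_le (by positivity) h1
  have hset : ⋂ j ∈ (Finset.univ : Finset (Fin n)), (A j)ᶜ = ⋂ i, (A i)ᶜ := by
    simp
  rw [hset] at hFpos
  rw [pos_iff_ne_zero]
  intro h
  rw [h] at hFpos
  simp at hFpos
end

section
/- Let U, W be finite sets with |U| ≤ |W| and let I(U,W) be the uniform space of injections U → W. Let A₁,…,Aₙ be canonical events, Aᵢ = A_{Sᵢ,Tᵢ,fᵢ}. Define a graph G on [n] by joining i and j iff the matchings (Sᵢ,Tᵢ,fᵢ) and (Sⱼ,Tⱼ,fⱼ) conflict (there is v ∈ Sᵢ ∩ Sⱼ with fᵢ(v) ≠ fⱼ(v), or v ∈ Tᵢ ∩ Tⱼ with fᵢ⁻¹(v) ≠ fⱼ⁻¹(v)). Then G is a negative dependency graph for A₁,…,Aₙ. -/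
/-!
Condition on the restriction of `σ` to `Sᵢ`. All fibres of this restriction map have the same
size, and `Aᵢ` is the fibre over `fᵢ`. For another value `τ` on `Sᵢ`, a permutation `e` of `W`
with `e ∘ fᵢ = τ` on `Sᵢ` that moves only points of `fᵢ(Sᵢ) ∪ τ(Sᵢ)` maps `σ ↦ e ∘ σ` injectively
from the fibre over `fᵢ` into the fibre over `τ`; when `j` does not conflict with `i`, `e ∘ σ ∈ Aⱼ`
forces `σ ∈ Aⱼ`. Hence `B = ⋂ⱼ Aⱼᶜ` meets `Aᵢ` in at most as many points as it meets any other
fibre, and averaging over the fibres gives `|Aᵢ ∩ B| · |I(U,W)| ≤ |Aᵢ| · |B|`.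
-/

open Finset Equiv

section Injections

variable {U W : Type*} [DecidableEq U] [DecidableEq W]

theorem exists_perm_apply_eq_of_injOn (s : Finset U) {F G : U → W}
    (hF : Set.InjOn F s) (hG : Set.InjOn G s) :
    ∃ e : Perm W, (∀ x ∈ s, e (F x) = G x) ∧
      ∀ w, w ∉ s.image F → w ∉ s.image G → e w = w := by
  induction s using Finset.induction_on with
  | empty => exact ⟨1, by simp, fun _ _ _ => rfl⟩
  | insert a s ha ih =>
    rw [coe_insert, Set.injOn_insert (mem_coe.not.2 ha)] at hF hG
    obtain ⟨e, he, hfix⟩ := ih hF.1 hG.1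
    refine ⟨swap (e (F a)) (G a) * e, fun x hx => ?_, fun w hwF hwG => ?_⟩
    · rcases mem_insert.1 hx with rfl | hx
      · simp
      rw [Perm.mul_apply, he x hx]
      refine swap_apply_of_ne_of_ne (fun h => hF.2 ?_) (fun h => hG.2 ⟨x, hx, h⟩)
      exact ⟨x, hx, e.injective (by rw [he x hx, h])⟩
    · rw [image_insert, mem_insert, not_or] at hwF hwG
      rw [Perm.mul_apply, hfix w hwF.2 hwG.2]
      exact swap_apply_of_ne_of_ne (fun h => hwF.1 (e.injective (by rw [hfix w hwF.2 hwG.2, h])))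
        hwG.1

theorem eqOn_of_perm_comp_eqOn {s t : Finset U} {F G H : U → W} {e : Perm W}
    (he : ∀ x ∈ s, e (F x) = G x) (hfix : ∀ w, w ∉ s.image F → w ∉ s.image G → e w = w)
    (hcommon : ∀ v ∈ s ∩ t, F v = H v) (hdistinct : ∀ x ∈ s, ∀ y ∈ t, x ≠ y → F x ≠ H y)
    {σ : U ↪ W} (hσ : ∀ x ∈ s, σ x = F x) (heσ : ∀ y ∈ t, e (σ y) = H y) :
    ∀ y ∈ t, σ y = H y := by
  intro y hy
  by_cases hys : y ∈ s
  · rw [hσ y hys, hcommon y (mem_inter.2 ⟨hys, hy⟩)]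
  have hσy : σ y ∉ s.image F := fun h => by
    obtain ⟨x, hx, hxy⟩ := mem_image.1 h
    exact hys (σ.injective ((hσ x hx).trans hxy) ▸ hx)
  have hHy : H y ∉ s.image F := fun h => by
    obtain ⟨x, hx, hxy⟩ := mem_image.1 h
    exact hdistinct x hx y hy (ne_of_mem_of_not_mem hx hys) hxy
  -- If `σ y ≠ H y`, then `e` moves `H y = e (σ y)`, so `H y ∈ G '' s = e '' (F '' s)`.
  by_contra hne
  have hHG : H y ∈ s.image G := by
    by_contra hHG
    exact hne (e.injective (by rw [heσ y hy, hfix _ hHy hHG]))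
  obtain ⟨x, hx, hxy⟩ := mem_image.1 hHG
  exact hσy (mem_image.2 ⟨x, hx, e.injective (by rw [he x hx, hxy, heσ y hy])⟩)

theorem card_filter_eqOn_and_le_of_perm [Fintype U] [Fintype W] (s : Finset U) {F G : U → W}
    (e : Perm W) (he : ∀ x ∈ s, e (F x) = G x) (P : (U ↪ W) → Prop) [DecidablePred P]
    (hP : ∀ σ : U ↪ W, (∀ x ∈ s, σ x = F x) → P σ → P (σ.trans e.toEmbedding)) :
    #{σ : U ↪ W | (∀ x ∈ s, σ x = F x) ∧ P σ} ≤ #{σ : U ↪ W | (∀ x ∈ s, σ x = G x) ∧ P σ} := by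
  refine card_le_card_of_injOn (fun σ => σ.trans e.toEmbedding) (fun σ hσ => ?_)
    (fun σ _ τ _ h => DFunLike.ext _ _ fun x => e.injective (DFunLike.congr_fun h x))
  simp only [coe_filter, Set.mem_ofPred_eq, mem_univ, true_and] at hσ ⊢
  refine ⟨fun x hx => ?_, hP σ hσ.1 hσ.2⟩
  simp [hσ.1 x hx, he x hx]

theorem card_filter_eqOn_eq_of_injOn [Fintype U] [Fintype W] (s : Finset U) {F G : U → W}
    (hF : Set.InjOn F s) (hG : Set.InjOn G s) :
    #{σ : U ↪ W | ∀ x ∈ s, σ x = F x} = #{σ : U ↪ W | ∀ x ∈ s, σ x = G x} := by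
  have key {F G : U → W} (hF : Set.InjOn F s) (hG : Set.InjOn G s) :
      #{σ : U ↪ W | ∀ x ∈ s, σ x = F x} ≤ #{σ : U ↪ W | ∀ x ∈ s, σ x = G x} := by
    obtain ⟨e, he, -⟩ := exists_perm_apply_eq_of_injOn s hF hG
    simpa using card_filter_eqOn_and_le_of_perm s e he (fun _ => True) fun _ _ _ => trivial
  exact (key hF hG).antisymm (key hG hF)

end Injections

theorem card_filter_and_mul_card_le_of_fiber {α β : Type*} [Fintype α] [DecidableEq β]
    (r : α → β) (b₀ : β) (P : α → Prop) [DecidablePred P]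
    (hfiber : ∀ a, #{x | r x = r a} = #{x | r x = b₀})
    (hP : ∀ a, #{x | r x = b₀ ∧ P x} ≤ #{x | r x = r a ∧ P x}) :
    #{x | r x = b₀ ∧ P x} * #(univ : Finset α) ≤ #{x | r x = b₀} * #{x | P x} := by
  calc #{x | r x = b₀ ∧ P x} * #(univ : Finset α)
      = ∑ b ∈ univ.image r, #{x | r x = b₀ ∧ P x} * #{x | r x = b₀} := by
        rw [card_eq_sum_card_image r univ, mul_sum]
        refine sum_congr rfl fun b hb => ?_
        obtain ⟨a, -, rfl⟩ := mem_image.1 hb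
        rw [hfiber]
    _ ≤ ∑ b ∈ univ.image r, #{x | r x = b ∧ P x} * #{x | r x = b₀} := by
        refine sum_le_sum fun b hb => ?_
        obtain ⟨a, -, rfl⟩ := mem_image.1 hb
        exact Nat.mul_le_mul_right _ (hP a)
    _ = #{x | r x = b₀} * #{x | P x} := by
        rw [card_eq_sum_card_fiberwise (f := r) (s := {x | P x}) (t := univ.image r)
          (fun x _ => mem_image_of_mem r (mem_univ x)), mul_sum]
        simp only [filter_filter, and_comm, mul_comm]

theorem lu_szekely_negative_dependency_general
    (U W : Type*) [Fintype U] [Fintype W] [DecidableEq U] [DecidableEq W]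
    (n : ℕ) (S : Fin n → Finset U) (f : Fin n → U → W)
    (hf : ∀ i, Set.InjOn (f i) (S i))
    (conflict : Fin n → Fin n → Prop)
    (hconf : ∀ i j, conflict i j ↔
      ((∃ v ∈ S i ∩ S j, f i v ≠ f j v) ∨
       (∃ x ∈ S i, ∃ y ∈ S j, x ≠ y ∧ f i x = f j y)))
    (i : Fin n) (I : Finset (Fin n)) (hI : ∀ j ∈ I, j ≠ i ∧ ¬ conflict i j) :
    (Finset.univ.filter (fun σ : U ↪ W =>
        (∀ x ∈ S i, σ x = f i x) ∧ ∀ j ∈ I, ¬ ∀ x ∈ S j, σ x = f j x)).card *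
      (Finset.univ : Finset (U ↪ W)).card ≤
    (Finset.univ.filter (fun σ : U ↪ W => ∀ x ∈ S i, σ x = f i x)).card *
      (Finset.univ.filter (fun σ : U ↪ W => ∀ j ∈ I, ¬ ∀ x ∈ S j, σ x = f j x)).card := by
  have restrict_eq (σ : U ↪ W) (F : U → W) :
      (S i : Set U).domRestrict σ = (S i : Set U).domRestrict F ↔ ∀ x ∈ S i, σ x = F x :=
    Set.domRestrict_eq_domRestrict_iff
  have averaged := card_filter_and_mul_card_le_of_fiber (fun σ : U ↪ W => (S i : Set U).domRestrict σ)
    ((S i : Set U).domRestrict (f i)) (fun σ => ∀ j ∈ I, ¬ ∀ x ∈ S j, σ x = f j x) ?_ ?_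
  · simpa only [restrict_eq] using averaged
  · intro τ
    simp only [restrict_eq]
    exact card_filter_eqOn_eq_of_injOn _ τ.injective.injOn (hf i)
  · intro τ
    simp only [restrict_eq]
    obtain ⟨e, he, hfix⟩ := exists_perm_apply_eq_of_injOn (S i) (hf i) τ.injective.injOn
    refine card_filter_eqOn_and_le_of_perm (S i) e he _ fun σ hσ havoid j hj heσ => havoid j hj ?_
    have hcompat := (hconf i j).not.1 (hI j hj).2
    push Not at hcompat
    exact eqOn_of_perm_comp_eqOn he hfix hcompat.1 hcompat.2 hσ heσ

/-- Lu–Székely: In the uniform space of injections `U ↪ W`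
(`|U| ≤ |W|`), consider canonical events `Aᵢ = A_{Sᵢ,Tᵢ,fᵢ}` given by matchings
(`fᵢ` injective on `Sᵢ`, `Tᵢ = fᵢ(Sᵢ)`).  Joining `i, j` iff the matchings conflict
(some `v ∈ Sᵢ ∩ Sⱼ` has `fᵢ(v) ≠ fⱼ(v)`, or some `w ∈ Tᵢ ∩ Tⱼ` has distinct
preimages) yields a negative dependency graph: for every `i` and every set `I` of
indices that are non-neighbors of `i`, if `P[⋂_{j∈I} Aⱼᶜ] > 0` then
`P[Aᵢ ∩ ⋂_{j∈I} Aⱼᶜ] ≤ P[Aᵢ]·P[⋂_{j∈I} Aⱼᶜ]` (stated by counting injections). -/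
theorem lu_szekely_negative_dependency
    (U W : Type*) [Fintype U] [Fintype W] [DecidableEq U] [DecidableEq W]
    (hUW : Fintype.card U ≤ Fintype.card W)
    (n : ℕ) (S : Fin n → Finset U) (f : Fin n → U → W)
    (hf : ∀ i, Set.InjOn (f i) (S i))
    (conflict : Fin n → Fin n → Prop)
    (hconf : ∀ i j, conflict i j ↔
      ((∃ v ∈ S i ∩ S j, f i v ≠ f j v) ∨
       (∃ x ∈ S i, ∃ y ∈ S j, x ≠ y ∧ f i x = f j y)))
    (i : Fin n) (I : Finset (Fin n)) (hI : ∀ j ∈ I, j ≠ i ∧ ¬ conflict i j)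
    (hpos : 0 < (Finset.univ.filter
      (fun σ : U ↪ W => ∀ j ∈ I, ¬ ∀ x ∈ S j, σ x = f j x)).card) :
    (Finset.univ.filter (fun σ : U ↪ W =>
        (∀ x ∈ S i, σ x = f i x) ∧ ∀ j ∈ I, ¬ ∀ x ∈ S j, σ x = f j x)).card *
      (Finset.univ : Finset (U ↪ W)).card ≤
    (Finset.univ.filter (fun σ : U ↪ W => ∀ x ∈ S i, σ x = f i x)).card *
      (Finset.univ.filter (fun σ : U ↪ W => ∀ j ∈ I, ¬ ∀ x ∈ S j, σ x = f j x)).card :=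
  lu_szekely_negative_dependency_general U W n S f hf conflict hconf i I hI
end
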